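/- arXiv:2012.02667 — 3 statements merged into one kernel-verified Lean document; each statement's English description precedes it below -/
import Mathlib

section
/- For every integer N ≥ 2, the set A_N = {(x,y,z) ∈ ℝ³ : z^{2N} = x² + y² and 0 ≤ z ≤ 1} is not a Lipschitz neighborhood retract: there do not exist an open set U ⊆ ℝ³ with A_N ⊆ U and a map f : U → ℝ³ that is Lipschitz on U, satisfies f(U) ⊆ A_N, and satisfies f(x) = x for every x ∈ A_N. -/
/-!
Restrict a `K`-Lipschitz retraction `f` onto `A_N` to the horizontal disk of radius `t ^ N` at
height `t`; its boundary circle lies in `A_N` and is fixed by `f`. The circle links the `z`-axis,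
so, since a nonvanishing map on a disk has a continuous logarithm while the identity of a circle
has none, some point of the disk is sent to the axis, which meets `A_N` only at the origin. That
point lies within `2 t ^ N` of the fixed circle at height `t`, so `t ≤ 2 K t ^ N`, which fails
for small `t` because `N ≥ 2`.
-/

open Metric Set NNReal Filter Topology

theorem Convex.exists_continuousOn_exp_eq {E : Type*} [NormedAddCommGroup E] [NormedSpace ℝ E]
    {S : Set E} (hS : Convex ℝ S) {g : E → ℂ} (hg : ContinuousOn g S)
    (hg0 : ∀ x ∈ S, g x ≠ 0) :
    ∃ L : E → ℂ, ContinuousOn L S ∧ ∀ x ∈ S, Complex.exp (L x) = g x := by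
  classical
  rcases S.eq_empty_or_nonempty with rfl | ⟨x₀, hx₀⟩
  · exact ⟨g, by simp⟩
  have := hS.contractibleSpace ⟨x₀, hx₀⟩
  have := hS.locallyPathConnectedSpace
  obtain ⟨F, ⟨-, hF⟩, -⟩ := Complex.isCoveringMapOn_exp.existsUnique_continuousMap_lifts
    ⟨S.domRestrict g, hg.domRestrict⟩ (a₀ := ⟨x₀, hx₀⟩) (Complex.exp_log (hg0 x₀ hx₀))
    fun x => hg0 x x.2
  refine ⟨fun x => if hx : x ∈ S then F ⟨x, hx⟩ else 0, ?_, fun x hx => ?_⟩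
  · rw [continuousOn_iff_continuous_domRestrict]
    convert F.continuous using 1
    ext ⟨x, hx⟩
    simp [hx]
  · simpa [hx] using congr_fun hF ⟨x, hx⟩

namespace Complex

theorem not_continuousOn_sphere_of_exp_eq_self {r : ℝ} (hr : 0 < r) {L : ℂ → ℂ}
    (hL : ∀ z ∈ sphere (0 : ℂ) r, exp (L z) = z) : ¬ ContinuousOn L (sphere 0 r) := by
  intro hL_cont
  -- `θ ↦ L (r e^{iθ}) - iθ` lifts the constant `r` through `exp`, so it is constant, but it
  -- drops by `2πi` over a period.
  set φ : ℝ → ℂ := fun θ => L (circleMap 0 r θ) - θ * I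
  have hφ_cont : Continuous φ :=
    (hL_cont.comp_continuous (continuous_circleMap 0 r) (circleMap_mem_sphere 0 hr.le)).sub
      (by fun_prop)
  have hexp_φ : ∀ θ, exp (φ θ) = r := fun θ => by
    rw [exp_sub, hL _ (circleMap_mem_sphere 0 hr.le θ), circleMap_zero,
      mul_div_cancel_right₀ _ (exp_ne_zero _)]
  have hφ_const := isCoveringMap_exp.const_of_comp hφ_cont
    (fun θ θ' => Subtype.ext ((hexp_φ θ).trans (hexp_φ θ').symm)) (2 * Real.pi) 0
  have hperiod : circleMap 0 r (2 * Real.pi) = circleMap 0 r 0 := by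
    simpa using periodic_circleMap 0 r 0
  simp [φ, hperiod, Real.pi_ne_zero] at hφ_const

theorem exists_eq_zero_of_continuousOn_closedBall_of_eqOn_sphere {r : ℝ} (hr : 0 < r)
    {g : ℂ → ℂ} (hg : ContinuousOn g (closedBall 0 r)) (hid : EqOn g id (sphere 0 r)) :
    ∃ z ∈ closedBall (0 : ℂ) r, g z = 0 := by
  by_contra! hg0
  obtain ⟨L, hL_cont, hL⟩ := (convex_closedBall (0 : ℂ) r).exists_continuousOn_exp_eq hg hg0
  exact not_continuousOn_sphere_of_exp_eq_self hr
    (fun z hz => (hL z (sphere_subset_closedBall hz)).trans (hid hz))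
    (hL_cont.mono sphere_subset_closedBall)

end Complex

noncomputable def horizontalPoint (t : ℝ) (z : ℂ) : EuclideanSpace ℝ (Fin 3) :=
  !₂[z.re, z.im, t]

theorem continuous_horizontalPoint (t : ℝ) : Continuous (horizontalPoint t) := by
  unfold horizontalPoint
  fun_prop

theorem dist_horizontalPoint (t : ℝ) (z w : ℂ) :
    dist (horizontalPoint t z) (horizontalPoint t w) = dist z w := by
  rw [EuclideanSpace.dist_eq, Fin.sum_univ_three, Complex.dist_eq, Complex.norm_eq_sqrt_sq_add_sq]
  simp [horizontalPoint, Real.dist_eq, sq_abs]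

theorem norm_horizontalPoint_le (t : ℝ) (z : ℂ) : ‖horizontalPoint t z‖ ≤ ‖z‖ + |t| := by
  have hsq : ‖horizontalPoint t z‖ ^ 2 = ‖z‖ ^ 2 + t ^ 2 := by
    rw [EuclideanSpace.norm_sq_eq, Fin.sum_univ_three, Complex.sq_norm, Complex.normSq_apply]
    simp [horizontalPoint]
    ring
  refine abs_le_of_sq_le_sq' ?_ (by positivity) |>.2
  rw [hsq]
  nlinarith [norm_nonneg z, abs_nonneg t, sq_abs t]

theorem exists_apply_horizontalPoint_on_zAxis
    {f : EuclideanSpace ℝ (Fin 3) → EuclideanSpace ℝ (Fin 3)} {t r : ℝ} (hr : 0 < r)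
    (hf : ContinuousOn f (horizontalPoint t '' closedBall 0 r))
    (hfix : ∀ z ∈ sphere (0 : ℂ) r, f (horizontalPoint t z) = horizontalPoint t z) :
    ∃ z ∈ closedBall (0 : ℂ) r, f (horizontalPoint t z) 0 = 0 ∧ f (horizontalPoint t z) 1 = 0 := by
  set g : ℂ → ℂ := fun z => f (horizontalPoint t z) 0 + f (horizontalPoint t z) 1 * Complex.I
  have hfh : ContinuousOn (fun z => f (horizontalPoint t z)) (closedBall 0 r) :=
    hf.comp (continuous_horizontalPoint t).continuousOn (mapsTo_image _ _)
  have hcoord : ∀ i, ContinuousOn (fun z => (f (horizontalPoint t z) i : ℂ)) (closedBall 0 r) :=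
    fun i => Complex.continuous_ofReal.comp_continuousOn
      ((EuclideanSpace.proj i).continuous.comp_continuousOn hfh)
  have hg : ContinuousOn g (closedBall 0 r) := (hcoord 0).add ((hcoord 1).mul continuousOn_const)
  obtain ⟨z, hz, hgz⟩ := Complex.exists_eq_zero_of_continuousOn_closedBall_of_eqOn_sphere hr hg
    fun z hz => by simp only [g, hfix z hz]; simp [horizontalPoint, Complex.re_add_im]
  exact ⟨z, hz, by simpa [Complex.ext_iff, g] using hgz⟩

def cuspSurface (N : ℕ) : Set (EuclideanSpace ℝ (Fin 3)) :=
  {p | p 2 ^ (2 * N) = p 0 ^ 2 + p 1 ^ 2 ∧ 0 ≤ p 2 ∧ p 2 ≤ 1}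

theorem zero_mem_cuspSurface {N : ℕ} (hN : N ≠ 0) : 0 ∈ cuspSurface N := by
  simp [cuspSurface, hN]

theorem horizontalPoint_mem_cuspSurface {N : ℕ} {t : ℝ} (ht₀ : 0 ≤ t) (ht₁ : t ≤ 1) {z : ℂ}
    (hz : ‖z‖ = t ^ N) : horizontalPoint t z ∈ cuspSurface N := by
  refine ⟨?_, by simpa [horizontalPoint] using ht₀, by simpa [horizontalPoint] using ht₁⟩
  have := congrArg (· ^ 2) hz
  simp only [Complex.sq_norm, Complex.normSq_apply] at this
  simp [horizontalPoint, pow_mul]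
  linear_combination -this

theorem apply_two_eq_zero_of_mem_cuspSurface {N : ℕ} {p : EuclideanSpace ℝ (Fin 3)}
    (hp : p ∈ cuspSurface N) (h₀ : p 0 = 0) (h₁ : p 1 = 0) : p 2 = 0 := by
  have := hp.1
  rw [h₀, h₁] at this
  exact eq_zero_of_pow_eq_zero (by simpa using this)

theorem LipschitzOnWith.le_two_mul_mul_pow_of_retraction_cuspSurface {N : ℕ}
    {U : Set (EuclideanSpace ℝ (Fin 3))}
    {f : EuclideanSpace ℝ (Fin 3) → EuclideanSpace ℝ (Fin 3)} {K : ℝ≥0}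
    (hfL : LipschitzOnWith K f U) (hfU : MapsTo f U (cuspSurface N))
    (hfix : ∀ p ∈ cuspSurface N, f p = p) {t : ℝ} (ht₀ : 0 < t) (ht₁ : t ≤ 1)
    (hdisk : horizontalPoint t '' closedBall 0 (t ^ N) ⊆ U) : t ≤ 2 * K * t ^ N := by
  have hsphere : ∀ z ∈ sphere (0 : ℂ) (t ^ N), horizontalPoint t z ∈ cuspSurface N :=
    fun z hz => horizontalPoint_mem_cuspSurface ht₀.le ht₁ (by simpa using hz)
  obtain ⟨z, hz, hf₀, hf₁⟩ := exists_apply_horizontalPoint_on_zAxis (pow_pos ht₀ N)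
    (hfL.continuousOn.mono hdisk) fun z hz => hfix _ (hsphere z hz)
  have hzU : horizontalPoint t z ∈ U := hdisk (mem_image_of_mem _ hz)
  have hf₂ := apply_two_eq_zero_of_mem_cuspSurface (hfU hzU) hf₀ hf₁
  set c : ℂ := ((t ^ N : ℝ) : ℂ)
  have hc : c ∈ sphere (0 : ℂ) (t ^ N) := by simp [c, abs_of_pos ht₀]
  have hcU : horizontalPoint t c ∈ U := hdisk (mem_image_of_mem _ (sphere_subset_closedBall hc))
  calc t = dist (f (horizontalPoint t z) 2) (f (horizontalPoint t c) 2) := by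
        rw [hf₂, hfix _ (hsphere c hc)]
        simp [horizontalPoint, Real.dist_eq, abs_of_pos ht₀]
    _ ≤ dist (f (horizontalPoint t z)) (f (horizontalPoint t c)) := PiLp.dist_apply_le _ _ 2
    _ ≤ K * dist (horizontalPoint t z) (horizontalPoint t c) := hfL.dist_le_mul _ hzU _ hcU
    _ ≤ K * (t ^ N + t ^ N) := by
        rw [dist_horizontalPoint]
        gcongr
        exact (dist_le_norm_add_norm z c).trans
          (add_le_add (mem_closedBall_zero_iff.mp hz) (mem_sphere_zero_iff_norm.mp hc).le)
    _ = 2 * K * t ^ N := by ring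

/-- For N ≥ 2, the cusped surface of revolution
`A_N = {(x,y,z) : z^(2N) = x² + y² ∧ 0 ≤ z ≤ 1}` is not a Lipschitz
neighborhood retract of ℝ³. -/
theorem not_lipschitz_neighborhood_retract (N : ℕ) (hN : 2 ≤ N)
    (A : Set (EuclideanSpace ℝ (Fin 3)))
    (hA : A = {p : EuclideanSpace ℝ (Fin 3) |
      (p 2 : ℝ) ^ (2 * N) = (p 0 : ℝ) ^ 2 + (p 1 : ℝ) ^ 2 ∧
        (0 : ℝ) ≤ p 2 ∧ (p 2 : ℝ) ≤ 1}) :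
    ¬ ∃ (U : Set (EuclideanSpace ℝ (Fin 3)))
        (f : EuclideanSpace ℝ (Fin 3) → EuclideanSpace ℝ (Fin 3)) (K : ℝ≥0),
        IsOpen U ∧ A ⊆ U ∧ LipschitzOnWith K f U ∧
        (∀ x ∈ U, f x ∈ A) ∧ (∀ x ∈ A, f x = x) := by
  rintro ⟨U, f, K, hU, hAU, hfL, hfU, hfix⟩
  change A = cuspSurface N at hA
  subst hA
  obtain ⟨ρ, hρ, hball⟩ := Metric.isOpen_iff.mp hU 0 (hAU (zero_mem_cuspSurface (by omega)))
  have hsmall : ∀ᶠ t in 𝓝[>] (0 : ℝ), t ≤ 1 ∧ 2 * t < ρ ∧ 2 * K * t < 1 := by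
    refine nhdsWithin_le_nhds ((eventually_le_nhds one_pos).and (.and ?_ ?_))
    · exact ((continuous_const.mul continuous_id).tendsto' 0 0 (by simp)).eventually_lt_const hρ
    · exact ((continuous_const.mul continuous_id).tendsto' 0 0 (by simp)).eventually_lt_const
        one_pos
  obtain ⟨t, ⟨ht₁, htρ, htK⟩, ht₀⟩ := (hsmall.and self_mem_nhdsWithin).exists
  have htN : t ^ N ≤ t ^ 2 := pow_le_pow_of_le_one ht₀.le ht₁ hN
  have hdisk : horizontalPoint t '' closedBall 0 (t ^ N) ⊆ U := by
    rintro _ ⟨z, hz, rfl⟩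
    refine hball (mem_ball_zero_iff.mpr ((norm_horizontalPoint_le t z).trans_lt ?_))
    rw [mem_closedBall_zero_iff] at hz
    nlinarith [abs_of_pos ht₀]
  have hlt : 2 * K * t ^ N < t := calc
    2 * K * t ^ N ≤ 2 * K * t ^ 2 := by gcongr
    _ = 2 * K * t * t := by ring
    _ < 1 * t := by gcongr
    _ = t := one_mul t
  exact (hfL.le_two_mul_mul_pow_of_retraction_cuspSurface hfU hfix ht₀ ht₁ hdisk).not_gt hlt
end

section
/- Let N ≥ 2 be an integer and let q be a real number with q > (N+1)/N. Then the quotient (2π ∫₀ʰ z^N √(1 + (N z^{N−1})²) dz) / (2π h^N)^q tends to +∞ as h → 0⁺ (i.e., along the filter of positive reals approaching 0). -/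
open Real Filter Set

/-! Since the square root in the integrand is at least `1`, the area below height `h` is at least
`2π h^(N+1)/(N+1)`, so the ratio is bounded below by a positive multiple of `h^(N+1-Nq)`, whose
exponent is negative exactly when `q > (N+1)/N`. -/

theorem pow_succ_div_le_integral_pow_mul_sqrt_one_add_sq (n : ℕ) {g : ℝ → ℝ} (hg : Continuous g)
    {h : ℝ} (hh : 0 ≤ h) :
    h ^ (n + 1) / (n + 1) ≤ ∫ z in (0:ℝ)..h, z ^ n * √(1 + g z ^ 2) := by
  calc h ^ (n + 1) / (n + 1) = ∫ z in (0:ℝ)..h, z ^ n := by simp [integral_pow]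
    _ ≤ ∫ z in (0:ℝ)..h, z ^ n * √(1 + g z ^ 2) := by
      refine intervalIntegral.integral_mono_on hh ((continuous_pow n).intervalIntegrable 0 h)
        ((by fun_prop : Continuous fun z : ℝ => z ^ n * √(1 + g z ^ 2)).intervalIntegrable 0 h)
        fun z hz => ?_
      have : 1 ≤ √(1 + g z ^ 2) := one_le_sqrt.mpr (by nlinarith [sq_nonneg (g z)])
      exact le_mul_of_one_le_right (pow_nonneg hz.1 n) this

theorem mul_pow_rpow {a h : ℝ} (ha : 0 ≤ a) (hh : 0 ≤ h) (n : ℕ) (q : ℝ) :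
    (a * h ^ n) ^ q = a ^ q * h ^ (n * q) := by
  rw [mul_rpow ha (by positivity), ← rpow_natCast, ← rpow_mul hh]

theorem rpow_le_isoperimetric_ratio (N : ℕ) (q : ℝ) {h : ℝ} (hh : 0 < h) :
    2 * π / (N + 1) / (2 * π) ^ q * h ^ ((N : ℝ) + 1 - N * q) ≤
      (2 * π * ∫ z in (0:ℝ)..h, z ^ N * √(1 + ((N : ℝ) * z ^ (N - 1)) ^ 2)) /
        (2 * π * h ^ N) ^ q := by
  have h2π : 0 < 2 * π := by positivity
  calc 2 * π / (N + 1) / (2 * π) ^ q * h ^ ((N : ℝ) + 1 - N * q)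
      = 2 * π * (h ^ (N + 1) / (N + 1)) / (2 * π * h ^ N) ^ q := by
        rw [mul_pow_rpow h2π.le hh.le, rpow_sub hh, ← rpow_natCast h (N + 1)]
        push_cast
        field_simp
    _ ≤ _ := by
      gcongr
      exact pow_succ_div_le_integral_pow_mul_sqrt_one_add_sq N (by fun_prop) hh.le

/-- For N ≥ 2 and q > (N+1)/N, the ratio of the area
`2π ∫₀ʰ z^N √(1 + (N z^(N-1))²) dz` to `(2π h^N)^q` tends to `+∞`
as `h → 0⁺`. -/
theorem isoperimetric_ratio_tendsto_atTop (N : ℕ) (hN : 2 ≤ N) (q : ℝ)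
    (hq : ((N : ℝ) + 1) / N < q) :
    Tendsto
      (fun h : ℝ =>
        (2 * π * ∫ z in (0:ℝ)..h, z ^ N * Real.sqrt (1 + ((N : ℝ) * z ^ (N - 1)) ^ 2)) /
          (2 * π * h ^ N) ^ q)
      (nhdsWithin 0 (Set.Ioi 0)) atTop := by
  have hexp : (N : ℝ) + 1 - N * q < 0 := by
    have hNpos : (0 : ℝ) < N := by exact_mod_cast (by omega : 0 < N)
    linarith [(div_lt_iff₀' hNpos).mp hq]
  have hc : 0 < 2 * π / (N + 1) / (2 * π) ^ q := by positivity
  refine tendsto_atTop_mono' _ ?_ ((tendsto_rpow_neg_nhdsGT_zero hexp).const_mul_atTop hc)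
  filter_upwards [self_mem_nhdsWithin] with h hh
  exact rpow_le_isoperimetric_ratio N q hh
end

section
/- Let E be a metric space, K ⊆ E a nonempty subset, a ∈ K, and L > 0. Suppose h : [0,1] × K → E is Lipschitz with constant L (with respect to the metric max(|s − t|, dist(x, y)) on [0,1] × K), takes values in K, and satisfies h(0, x) = x and h(1, x) = a for every x ∈ K. Then for all b, c ∈ K there exists a continuous map γ : [0,1] → E with γ(0) = b, γ(1) = c, γ([0,1]) ⊆ K, and total variation (arc length) of γ on [0,1] at most 2L. In particular, the intrinsic diameter of K is at most 2L. -/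
/-!
Run the contraction from `b` to `a` and then backwards from `a` to `c`. Each leg is a track
`t ↦ h (t, x)`, which is `L`-Lipschitz, so the two legs traversed in unit time form a
`2L`-Lipschitz path on `[0, 1]`, and such a path has length at most `2L`.
-/

open Set NNReal

theorem LipschitzOnWith.Icc_union_Icc {X : Type*} [PseudoMetricSpace X] {f : ℝ → X} {K : ℝ≥0}
    {a m b : ℝ} (hf₁ : LipschitzOnWith K f (Icc a m)) (hf₂ : LipschitzOnWith K f (Icc m b)) :
    LipschitzOnWith K f (Icc a b) := by
  have key : ∀ s ∈ Icc a b, ∀ t ∈ Icc a b, s ≤ t → dist (f s) (f t) ≤ K * dist s t := by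
    rintro s ⟨has, hsb⟩ t ⟨hat, htb⟩ hst
    rcases le_total t m with htm | hmt
    · exact hf₁.dist_le_mul s ⟨has, hst.trans htm⟩ t ⟨hat, htm⟩
    rcases le_total m s with hms | hsm
    · exact hf₂.dist_le_mul s ⟨hms, hsb⟩ t ⟨hms.trans hst, htb⟩
    calc dist (f s) (f t) ≤ dist (f s) (f m) + dist (f m) (f t) := dist_triangle _ _ _
      _ ≤ K * dist s m + K * dist m t := add_le_add
          (hf₁.dist_le_mul s ⟨has, hsm⟩ m ⟨has.trans hsm, le_rfl⟩)
          (hf₂.dist_le_mul m ⟨le_rfl, hmt.trans htb⟩ t ⟨hmt, htb⟩)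
      _ = K * dist s t := by
          rw [Real.dist_eq, Real.dist_eq, Real.dist_eq, abs_of_nonpos (by linarith),
            abs_of_nonpos (by linarith), abs_of_nonpos (by linarith)]
          ring
  refine LipschitzOnWith.of_dist_le_mul fun s hs t ht => ?_
  rcases le_total s t with hst | hts
  · exact key s hs t ht hst
  · rw [dist_comm, dist_comm s]
    exact key t ht s hs hts

theorem LipschitzOnWith.eVariationOn_Icc_le {X : Type*} [PseudoEMetricSpace X] {f : ℝ → X}
    {K : ℝ≥0} {a b : ℝ} (hf : LipschitzOnWith K f (Icc a b)) :
    eVariationOn f (Icc a b) ≤ K * ENNReal.ofReal (b - a) :=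
  eVariationOn_id_Icc a b ▸ hf.comp_eVariationOn_le (mapsTo_id _)

theorem LipschitzOnWith.slice {X Y Z : Type*} [PseudoEMetricSpace X] [PseudoEMetricSpace Y]
    [PseudoEMetricSpace Z] {h : X × Y → Z} {K : ℝ≥0} {s : Set X} {t : Set Y}
    (hh : LipschitzOnWith K h (s ×ˢ t)) {y : Y} (hy : y ∈ t) :
    LipschitzOnWith K (fun x => h (x, y)) s := by
  have := hh.comp (LipschitzWith.prodMk_right y).lipschitzOnWith fun x hx => ⟨hx, hy⟩
  rwa [mul_one] at this

section transSymm

variable {X : Type*} (f g : ℝ → X)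

noncomputable def transSymm : ℝ → X := fun t => if t ≤ 1 / 2 then f (2 * t) else g (2 - 2 * t)

theorem transSymm_zero : transSymm f g 0 = f 0 := by simp [transSymm]

theorem transSymm_one : transSymm f g 1 = g 0 := by norm_num [transSymm]

variable {f g}

theorem transSymm_of_le_half {t : ℝ} (ht : t ≤ 1 / 2) : transSymm f g t = f (2 * t) :=
  if_pos ht

theorem transSymm_of_half_le (hfg : f 1 = g 1) {t : ℝ} (ht : 1 / 2 ≤ t) :
    transSymm f g t = g (2 - 2 * t) := by
  rcases ht.lt_or_eq with ht | rfl
  · exact if_neg (not_le.mpr ht)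
  · norm_num [transSymm, hfg]

theorem mapsTo_transSymm {s : Set X} (hf : MapsTo f (Icc 0 1) s) (hg : MapsTo g (Icc 0 1) s) :
    MapsTo (transSymm f g) (Icc 0 1) s := by
  rintro t ⟨ht₀, ht₁⟩
  rcases le_or_gt t (1 / 2) with ht | ht
  · rw [transSymm_of_le_half ht]
    exact hf ⟨by linarith, by linarith⟩
  · rw [transSymm, if_neg (not_le.mpr ht)]
    exact hg ⟨by linarith, by linarith⟩

theorem lipschitzOnWith_transSymm [PseudoMetricSpace X] {K : ℝ≥0} (hfg : f 1 = g 1)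
    (hf : LipschitzOnWith K f (Icc 0 1)) (hg : LipschitzOnWith K g (Icc 0 1)) :
    LipschitzOnWith (2 * K) (transSymm f g) (Icc 0 1) := by
  have first_half : LipschitzOnWith (2 * K) (transSymm f g) (Icc 0 (1 / 2)) := by
    refine LipschitzOnWith.of_dist_le_mul fun s hs t ht => ?_
    rw [transSymm_of_le_half hs.2, transSymm_of_le_half ht.2]
    calc dist (f (2 * s)) (f (2 * t)) ≤ K * dist (2 * s) (2 * t) :=
          hf.dist_le_mul _ ⟨by linarith [hs.1], by linarith [hs.2]⟩
            _ ⟨by linarith [ht.1], by linarith [ht.2]⟩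
      _ = ↑(2 * K) * dist s t := by
          rw [Real.dist_eq, Real.dist_eq, ← mul_sub, abs_mul, abs_two]; push_cast; ring
  have second_half : LipschitzOnWith (2 * K) (transSymm f g) (Icc (1 / 2) 1) := by
    refine LipschitzOnWith.of_dist_le_mul fun s hs t ht => ?_
    rw [transSymm_of_half_le hfg hs.1, transSymm_of_half_le hfg ht.1]
    calc dist (g (2 - 2 * s)) (g (2 - 2 * t)) ≤ K * dist (2 - 2 * s) (2 - 2 * t) :=
          hg.dist_le_mul _ ⟨by linarith [hs.2], by linarith [hs.1]⟩
            _ ⟨by linarith [ht.2], by linarith [ht.1]⟩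
      _ = ↑(2 * K) * dist s t := by
          rw [Real.dist_eq, Real.dist_eq, sub_sub_sub_cancel_left, ← mul_sub, abs_mul, abs_two,
            abs_sub_comm]; push_cast; ring
  exact first_half.Icc_union_Icc second_half

end transSymm

theorem intrinsic_diameter_le_of_lipschitz_contraction_general
    {E : Type*} [MetricSpace E] (K : Set E)
    (a : E) (L : ℝ≥0)
    (h : ℝ × E → E)
    (hlip : LipschitzOnWith L h (Set.Icc (0:ℝ) 1 ×ˢ K))
    (hmaps : ∀ t ∈ Set.Icc (0:ℝ) 1, ∀ x ∈ K, h (t, x) ∈ K)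
    (h0 : ∀ x ∈ K, h (0, x) = x)
    (h1 : ∀ x ∈ K, h (1, x) = a) :
    ∀ b ∈ K, ∀ c ∈ K, ∃ γ : ℝ → E,
      ContinuousOn γ (Set.Icc (0:ℝ) 1) ∧
      γ 0 = b ∧ γ 1 = c ∧
      γ '' Set.Icc (0:ℝ) 1 ⊆ K ∧
      eVariationOn γ (Set.Icc (0:ℝ) 1) ≤ ENNReal.ofReal (2 * L) := by
  intro b hb c hc
  let γ := transSymm (fun t => h (t, b)) (fun t => h (t, c))
  have hγ : LipschitzOnWith (2 * L) γ (Icc 0 1) :=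
    lipschitzOnWith_transSymm (by simp only [h1 b hb, h1 c hc]) (hlip.slice hb) (hlip.slice hc)
  refine ⟨γ, hγ.continuousOn, (transSymm_zero _ _).trans (h0 b hb),
    (transSymm_one _ _).trans (h0 c hc), ?_, ?_⟩
  · exact (mapsTo_transSymm (fun t ht => hmaps t ht b hb) fun t ht => hmaps t ht c hc).image_subset
  · simpa using hγ.eVariationOn_Icc_le

/-- If `h : [0,1] × K → K` is an `L`-Lipschitz contraction of `K` to a point
`a ∈ K` (i.e. `h(0,·) = id`, `h(1,·) ≡ a`), then any two points `b, c ∈ K` are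
joined by a continuous path in `K` of arc length (total variation) at most
`2L`; in particular the intrinsic diameter of `K` is at most `2L`. -/
theorem intrinsic_diameter_le_of_lipschitz_contraction
    {E : Type*} [MetricSpace E] (K : Set E) (hK : K.Nonempty)
    (a : E) (ha : a ∈ K) (L : ℝ≥0) (hL : 0 < L)
    (h : ℝ × E → E)
    (hlip : LipschitzOnWith L h (Set.Icc (0:ℝ) 1 ×ˢ K))
    (hmaps : ∀ t ∈ Set.Icc (0:ℝ) 1, ∀ x ∈ K, h (t, x) ∈ K)
    (h0 : ∀ x ∈ K, h (0, x) = x)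
    (h1 : ∀ x ∈ K, h (1, x) = a) :
    ∀ b ∈ K, ∀ c ∈ K, ∃ γ : ℝ → E,
      ContinuousOn γ (Set.Icc (0:ℝ) 1) ∧
      γ 0 = b ∧ γ 1 = c ∧
      γ '' Set.Icc (0:ℝ) 1 ⊆ K ∧
      eVariationOn γ (Set.Icc (0:ℝ) 1) ≤ ENNReal.ofReal (2 * L) :=
  intrinsic_diameter_le_of_lipschitz_contraction_general K a L h hlip hmaps h0 h1
end
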